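/- arXiv:0810.5582 — 7 statements merged into one kernel-verified Lean document; each statement's English description precedes it below -/
import Mathlib

section
/- Let $G$ be a finite nonempty multiset of points in $\{0,1\}^m$ (represented as a finite index set $I$ with a map $x : I \to \mathrm{Fin}\ m \to \mathrm{Bool}$). If a center $c \in \{0,1\}^m$ is chosen by picking an index $j \in I$ uniformly at random and setting $c = x(j)$, then the expected sum of Hamming distances $\mathbb{E}[\sum_{i \in I} d_H(x(i), c)]$ equals $\sum_{k=1}^{m} \frac{2 N_1^k N_0^k}{N_1^k + N_0^k}$, where $N_1^k = |\{i \in I : x(i)_k = 1\}|$ and $N_0^k = |\{i \in I : x(i)_k = 0\}|$ (terms with $N_1^k + N_0^k = 0$ are interpreted as $0$; here $N_1^k + N_0^k = |I| > 0$). -/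
/-!
Summing the Hamming distances over all ordered pairs and exchanging the order of summation,
coordinate `s` contributes the number of ordered pairs `(i, j)` with `x i s ≠ x j s`, which is
`2 N₁ˢ N₀ˢ`. Dividing by `|I| = N₁ˢ + N₀ˢ` gives the formula.
-/

open Finset

theorem sum_sum_hammingDist_eq_sum_card {ι I β : Type*} [Fintype ι] [Fintype I] [DecidableEq β]
    (x : I → ι → β) :
    ∑ i, ∑ j, hammingDist (x i) (x j) = ∑ s, #{p : I × I | x p.1 s ≠ x p.2 s} := by
  simp only [hammingDist, card_eq_sum_ones, sum_filter]
  rw [← Fintype.sum_prod_type']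
  exact Finset.sum_comm

theorem card_pairs_ne_bool {I : Type*} [Fintype I] (y : I → Bool) :
    #{p : I × I | y p.1 ≠ y p.2} = 2 * #{i | y i = true} * #{i | y i = false} := by
  set T : Finset I := {i | y i = true}
  set F : Finset I := {i | y i = false}
  have hdisj : Disjoint (T ×ˢ F) (F ×ˢ T) :=
    disjoint_product.mpr (Or.inl (disjoint_filter.mpr fun i _ h => by simp [h]))
  have hsplit : ({p : I × I | y p.1 ≠ y p.2} : Finset (I × I)) =
      (T ×ˢ F).disjUnion (F ×ˢ T) hdisj := by
    ext ⟨i, j⟩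
    simp only [T, F, mem_filter, mem_univ, true_and, mem_disjUnion, mem_product]
    cases y i <;> cases y j <;> decide
  rw [hsplit, card_disjUnion, card_product, card_product]
  ring

theorem card_filter_true_add_card_filter_false {I : Type*} [Fintype I] (y : I → Bool) :
    #{i | y i = true} + #{i | y i = false} = Fintype.card I := by
  simpa using card_filter_add_card_filter_not (s := (univ : Finset I)) (fun i => y i = true)

theorem stmt1_general {I : Type*} [Fintype I] {m : ℕ} (x : I → Fin m → Bool) :
    (∑ j : I, ∑ i : I, (hammingDist (x i) (x j) : ℝ)) / (Fintype.card I : ℝ) =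
      ∑ s : Fin m,
        (2 * ((Finset.univ.filter fun i => x i s = true).card : ℝ) *
            ((Finset.univ.filter fun i => x i s = false).card : ℝ)) /
          (((Finset.univ.filter fun i => x i s = true).card : ℝ) +
            ((Finset.univ.filter fun i => x i s = false).card : ℝ)) := by
  have hdist : ∑ j : I, ∑ i : I, hammingDist (x i) (x j) =
      ∑ s, 2 * #{i | x i s = true} * #{i | x i s = false} := by
    rw [Finset.sum_comm, sum_sum_hammingDist_eq_sum_card]
    exact Finset.sum_congr rfl fun s _ => card_pairs_ne_bool (x · s)
  have hcard (s : Fin m) :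
      (#{i | x i s = true} : ℝ) + #{i | x i s = false} = Fintype.card I := by
    exact_mod_cast card_filter_true_add_card_filter_false (x · s)
  simp only [hcard, ← Finset.sum_div]
  exact_mod_cast congrArg (fun n : ℕ => (n : ℝ) / Fintype.card I) hdist

theorem stmt1 {I : Type*} [Fintype I] [Nonempty I] {m : ℕ} (x : I → Fin m → Bool) :
    (∑ j : I, ∑ i : I, (hammingDist (x i) (x j) : ℝ)) / (Fintype.card I : ℝ) =
      ∑ s : Fin m,
        (2 * ((Finset.univ.filter fun i => x i s = true).card : ℝ) *
            ((Finset.univ.filter fun i => x i s = false).card : ℝ)) /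
          (((Finset.univ.filter fun i => x i s = true).card : ℝ) +
            ((Finset.univ.filter fun i => x i s = false).card : ℝ)) :=
  stmt1_general x
end

section
/- Let $m, k \ge 1$ and let a finite set of points in $\{0,1\}^m$ be partitioned into clusters each of size at least $k$, with an arbitrary center in $\{0,1\}^m$ assigned to each cluster. Then there exists an assignment of centers to the same clusters, with each center chosen from among the points of its own cluster, whose total cost (sum over all points of the Hamming distance to their cluster's center) is at most twice the total cost of the original assignment. -/
/-! Replace each center by the member of its cluster nearest to it. For a point `x` of that
cluster with old center `c` and new center `y`, the triangle inequality gives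
`d(x, y) ≤ d(x, c) + d(c, y) ≤ 2 d(x, c)`, since `y` is at least as close to `c` as `x` is. -/

open Finset

theorem hammingDist_le_two_mul_of_hammingDist_le {ι : Type*} [Fintype ι] {β : ι → Type*}
    [∀ i, DecidableEq (β i)] {x y z : ∀ i, β i} (h : hammingDist y z ≤ hammingDist x z) :
    hammingDist x y ≤ 2 * hammingDist x z :=
  calc hammingDist x y ≤ hammingDist x z + hammingDist z y := hammingDist_triangle x z y
    _ ≤ hammingDist x z + hammingDist x z := by rw [hammingDist_comm z y]; gcongr
    _ = 2 * hammingDist x z := (two_mul _).symm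

theorem Function.Surjective.exists_section_minimizing {I C α : Type*} [Fintype I]
    [LinearOrder α] {g : I → C} (hg : g.Surjective) (f : I → C → α) :
    ∃ sel : C → I, (∀ t, g (sel t) = t) ∧ ∀ i, f (sel (g i)) (g i) ≤ f i (g i) := by
  classical
  have hne (t : C) : (univ.filter fun i => g i = t).Nonempty :=
    let ⟨i, hi⟩ := hg t; ⟨i, mem_filter.mpr ⟨mem_univ i, hi⟩⟩
  choose sel hsel hmin using fun t => exists_min_image _ (f · t) (hne t)
  exact ⟨sel, fun t => (mem_filter.mp (hsel t)).2,
    fun i => hmin (g i) i (mem_filter.mpr ⟨mem_univ i, rfl⟩)⟩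

theorem stmt4_general {I C : Type*} [Fintype I] [DecidableEq C] {m k : ℕ}
    (hk : 1 ≤ k) (x : I → Fin m → Bool) (g : I → C)
    (c : C → Fin m → Bool)
    (hsize : ∀ t : C, k ≤ (Finset.univ.filter fun i => g i = t).card) :
    ∃ sel : C → I, (∀ t : C, g (sel t) = t) ∧
      ∑ i : I, hammingDist (x i) (x (sel (g i))) ≤
        2 * ∑ i : I, hammingDist (x i) (c (g i)) := by
  have hg : g.Surjective := fun t => by
    obtain ⟨i, hi⟩ := card_pos.mp (hk.trans (hsize t))
    exact ⟨i, (mem_filter.mp hi).2⟩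
  obtain ⟨sel, hsel, hnear⟩ :=
    hg.exists_section_minimizing fun i t => hammingDist (x i) (c t)
  refine ⟨sel, hsel, ?_⟩
  rw [mul_sum]
  exact sum_le_sum fun i _ => hammingDist_le_two_mul_of_hammingDist_le (hnear i)

theorem stmt4 {I C : Type*} [Fintype I] [Fintype C] [DecidableEq C] {m k : ℕ}
    (hm : 1 ≤ m) (hk : 1 ≤ k) (x : I → Fin m → Bool) (g : I → C)
    (c : C → Fin m → Bool)
    (hsize : ∀ t : C, k ≤ (Finset.univ.filter fun i => g i = t).card) :
    ∃ sel : C → I, (∀ t : C, g (sel t) = t) ∧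
      ∑ i : I, hammingDist (x i) (x (sel (g i))) ≤
        2 * ∑ i : I, hammingDist (x i) (c (g i)) :=
  stmt4_general hk x g c hsize
end

section
/- Let $R$ be a finite dataset of tuples in $\{0,1\}^m$ and consider a feasible suppression-based $k$-anonymous solution: a partition of the tuples into groups of size at least $k$ together with, for each group, a set of suppressed columns such that all tuples in a group agree on all non-suppressed columns; its cost is the total number of suppressed cells (number of tuples in the group times number of suppressed columns, summed over groups). From such a solution one can construct a flip-based $k$-anonymous solution (a modification of the dataset by flipping bits so that every tuple is identical to at least $k-1$ others) whose cost (number of flipped bits) is at most the suppression cost. -/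
/-! Replace every row by the row of a fixed representative of its group. Rows of one group agree
outside the group's suppressed columns, so each row is changed in at most `|P t|` positions, and
rows of one group become identical, so every new row occurs at least `k` times. -/

open Finset

theorem exists_fiber_representative {I C : Type*} (g : I → C) :
    ∃ r : I → I, (∀ i, g (r i) = g i) ∧ ∀ i j, g i = g j → r i = r j := by
  let rep : Set.range g → I := fun t => t.2.choose
  exact ⟨fun i => rep ⟨g i, i, rfl⟩, fun i => (Set.mem_range_self i).choose_spec,
    fun i j h => congrArg rep (Subtype.ext h)⟩

theorem hammingDist_le_card_of_eqOn_compl {ι : Type*} [Fintype ι] {β : ι → Type*}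
    [∀ s, DecidableEq (β s)] {x y : ∀ s, β s} (S : Finset ι) (h : ∀ s ∉ S, x s = y s) :
    hammingDist x y ≤ S.card :=
  card_le_card fun s hs => by
    by_contra hsS
    exact (mem_filter.mp hs).2 (h s hsS)

theorem sum_comp_eq_sum_card_fiber_mul {I C : Type*} [Fintype I] [Fintype C] [DecidableEq C]
    (g : I → C) (f : C → ℕ) :
    ∑ i, f (g i) = ∑ t, (univ.filter fun i => g i = t).card * f t := by
  rw [← sum_fiberwise univ g]
  refine sum_congr rfl fun t _ => ?_
  rw [sum_congr rfl fun i hi => congrArg f (mem_filter.mp hi).2, sum_const, smul_eq_mul]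

theorem stmt6 {I C : Type*} [Fintype I] [Fintype C] [DecidableEq C] {m k : ℕ}
    (x : I → Fin m → Bool) (g : I → C) (P : C → Finset (Fin m))
    (hsize : ∀ t : C, k ≤ (Finset.univ.filter fun i => g i = t).card)
    (hagree : ∀ i j : I, g i = g j → ∀ s : Fin m, s ∉ P (g i) → x i s = x j s) :
    ∃ x' : I → Fin m → Bool,
      (∀ i : I, k ≤ (Finset.univ.filter fun j => x' j = x' i).card) ∧
      ∑ i : I, hammingDist (x i) (x' i) ≤
        ∑ t : C, (Finset.univ.filter fun i => g i = t).card * (P t).card := by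
  obtain ⟨r, hr_fiber, hr_const⟩ := exists_fiber_representative g
  refine ⟨fun i => x (r i), fun i => ?_, ?_⟩
  · refine (hsize (g i)).trans (card_le_card fun j hj => ?_)
    simp only [mem_filter, mem_univ, true_and] at hj ⊢
    rw [hr_const j i hj]
  · calc ∑ i, hammingDist (x i) (x (r i)) ≤ ∑ i, (P (g i)).card :=
          sum_le_sum fun i _ =>
            hammingDist_le_card_of_eqOn_compl _ (hagree i (r i) (hr_fiber i).symm)
      _ = _ := sum_comp_eq_sum_card_fiber_mul g fun t => (P t).card
end

section
/- Let $OPT_{flip}$ be an optimal flip-based $k$-anonymous solution of a binary dataset $R$ of $n \ge k$ tuples in $\{0,1\}^m$, in which every anonymity group has size at most $2k - 1$. Then the optimal suppression-based $k$-anonymization cost $\mathrm{Cost}(OPT_*)$ satisfies $\mathrm{Cost}(OPT_*) \le (2k-1) \cdot \mathrm{Cost}(OPT_{flip})$. -/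
/-! Suppress, in each group of the flip solution, every column in which some member was flipped.
Members of a group then agree on the remaining columns, since each equals the group's center there.
A group's suppressed columns are at most its number of flips, and each of them is paid once per
member of the group, i.e. at most `2k - 1` times. -/

open Finset

section Suppression

variable {I G ι β : Type*} [Fintype I] [DecidableEq G] [Fintype ι] [DecidableEq ι] [DecidableEq β]

def flipColumns (x : I → ι → β) (r : I → G) (y : G → ι → β) (g : G) : Finset ι :=
  (univ.filter fun j => r j = g).biUnion fun j => univ.filter fun s => x j s ≠ y g s

theorem eq_of_notMem_flipColumns (x : I → ι → β) (r : I → G) (y : G → ι → β) {i j : I}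
    (hij : r i = r j) {s : ι} (hs : s ∉ flipColumns x r y (r i)) : x i s = x j s := by
  have center_eq {l : I} (hl : r l = r i) : x l s = y (r i) s := by
    by_contra hne
    exact hs (mem_biUnion.2 ⟨l, by simpa using hl, by simpa using hne⟩)
  rw [center_eq rfl, center_eq hij.symm]

theorem card_flipColumns_le (x : I → ι → β) (r : I → G) (y : G → ι → β) (g : G) :
    #(flipColumns x r y g) ≤ ∑ j ∈ {j | r j = g}, hammingDist (x j) (y (r j)) :=
  card_biUnion_le.trans_eq <| sum_congr rfl fun j hj => by
    rw [(mem_filter.1 hj).2]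
    rfl

end Suppression

theorem Finset.sum_sum_fiber_le_mul_sum {I α : Type*} [Fintype I] [DecidableEq α] (f : I → α)
    (d : I → ℕ) {c : ℕ} (hc : ∀ i, #{j | f j = f i} ≤ c) :
    ∑ i, ∑ j ∈ {j | f j = f i}, d j ≤ c * ∑ i, d i := by
  calc ∑ i, ∑ j ∈ {j | f j = f i}, d j
      = ∑ j, ∑ i, if f i = f j then d j else 0 := by
        simp only [sum_filter]
        rw [sum_comm]
        exact sum_congr rfl fun j _ => sum_congr rfl fun i _ => by simp only [eq_comm]
    _ = ∑ j, #{i | f i = f j} * d j := by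
        simp_rw [← sum_filter, sum_const, smul_eq_mul]
    _ ≤ ∑ j, c * d j := sum_le_sum fun j _ => Nat.mul_le_mul_right _ (hc j)
    _ = c * ∑ i, d i := (mul_sum ..).symm

theorem stmt8_general {I : Type*} [Fintype I] [DecidableEq I] {m k : ℕ} (x : I → Fin m → Bool)
    (r : I → I) (y : I → Fin m → Bool)
    (hidem : ∀ i, r (r i) = r i)
    (hsize : ∀ i : I, k ≤ (Finset.univ.filter fun j => r j = r i).card)
    (hsmall : ∀ i : I, (Finset.univ.filter fun j => r j = r i).card ≤ 2 * k - 1) :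
    ∃ (r' : I → I) (P : I → Finset (Fin m)),
      (∀ i, r' (r' i) = r' i) ∧
      (∀ i : I, k ≤ (Finset.univ.filter fun j => r' j = r' i).card) ∧
      (∀ i j : I, r' i = r' j → ∀ s : Fin m, s ∉ P (r' i) → x i s = x j s) ∧
      ∑ i : I, (P (r' i)).card ≤ (2 * k - 1) * ∑ i : I, hammingDist (x i) (y (r i)) := by
  refine ⟨r, flipColumns x r y, hidem, hsize,
    fun i j hij s hs => eq_of_notMem_flipColumns x r y hij hs, ?_⟩
  calc ∑ i, #(flipColumns x r y (r i))
      ≤ ∑ i, ∑ j ∈ {j | r j = r i}, hammingDist (x j) (y (r j)) :=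
        sum_le_sum fun i _ => card_flipColumns_le x r y (r i)
    _ ≤ (2 * k - 1) * ∑ i, hammingDist (x i) (y (r i)) :=
        sum_sum_fiber_le_mul_sum r _ hsmall

theorem stmt8 {I : Type*} [Fintype I] [DecidableEq I] {m k : ℕ} (hk : 1 ≤ k)
    (hn : k ≤ Fintype.card I) (x : I → Fin m → Bool)
    (r : I → I) (y : I → Fin m → Bool)
    (hidem : ∀ i, r (r i) = r i)
    (hsize : ∀ i : I, k ≤ (Finset.univ.filter fun j => r j = r i).card)
    (hsmall : ∀ i : I, (Finset.univ.filter fun j => r j = r i).card ≤ 2 * k - 1) :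
    ∃ (r' : I → I) (P : I → Finset (Fin m)),
      (∀ i, r' (r' i) = r' i) ∧
      (∀ i : I, k ≤ (Finset.univ.filter fun j => r' j = r' i).card) ∧
      (∀ i j : I, r' i = r' j → ∀ s : Fin m, s ∉ P (r' i) → x i s = x j s) ∧
      ∑ i : I, (P (r' i)).card ≤ (2 * k - 1) * ∑ i : I, hammingDist (x i) (y (r i)) :=
  stmt8_general x r y hidem hsize hsmall
end

section
/- In any flip-based $k$-anonymous solution, any anonymity group of size $2k$ or more can be split into two groups each of size at least $k$ without increasing the cost; consequently, there always exists an optimal flip-based $k$-anonymous solution in which every group has size at most $2k - 1$. -/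
/-!
Represent a solution by a map `r` sending each tuple to the representative of its group. If a
group has at least `2k` members, move `k` of them other than its representative into a new group
represented by one of them, and let every representative inherit the target of its old group: the
solution stays feasible, its cost is unchanged, and `∑ i, #(group of i)` strictly decreases. Hence
among the optimal solutions, one minimising this sum has all groups of size at most `2k - 1`.
-/

open Finset

theorem Finset.exists_disjoint_union_eq_of_add_le_card {α : Type*} [DecidableEq α]
    {G : Finset α} {k l : ℕ} (hG : k + l ≤ #G) :
    ∃ G₁ G₂ : Finset α, Disjoint G₁ G₂ ∧ G₁ ∪ G₂ = G ∧ k ≤ #G₁ ∧ l ≤ #G₂ := by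
  obtain ⟨G₁, hG₁, hcard⟩ := exists_subset_card_eq (s := G) (n := k) (by omega)
  refine ⟨G₁, G \ G₁, disjoint_sdiff, union_sdiff_of_subset hG₁, hcard.ge, ?_⟩
  rw [card_sdiff_of_subset hG₁]
  omega

namespace KAnonymity

variable {I : Type*}

def cost [Fintype I] {ι β : Type*} [Fintype ι] [DecidableEq β] (x : I → ι → β) (r : I → I)
    (y : I → ι → β) : ℕ :=
  ∑ i, hammingDist (x i) (y (r i))

lemma cost_comp_of_comp_eq [Fintype I] {ι β : Type*} [Fintype ι] [DecidableEq β] (x : I → ι → β)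
    (y : I → ι → β) {r r' : I → I} (h : r ∘ r' = r) : cost x r' (y ∘ r) = cost x r y :=
  sum_congr rfl fun i _ => by rw [← congrFun h i]; rfl

lemma apply_ne_of_mem {r : I → I} {T : Finset I} {c t : I} (hr : ∀ i, r (r i) = r i)
    (hT : ∀ j ∈ T, r j = c) (hc : c ∉ T) (ht : t ∈ T) (j : I) : r j ≠ t := by
  intro h
  have : r t = t := by rw [← h, hr]
  exact hc (by rw [← hT t ht, this]; exact ht)

section Reassign

variable [DecidableEq I]

def reassign (r : I → I) (T : Finset I) (t : I) : I → I := fun j => if j ∈ T then t else r j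

variable {r : I → I} {T : Finset I} {c t : I}

lemma reassign_eq_iff (hr : ∀ i, r (r i) = r i) (hT : ∀ j ∈ T, r j = c) (hc : c ∉ T)
    (ht : t ∈ T) (j : I) : reassign r T t j = t ↔ j ∈ T := by
  unfold reassign
  split_ifs with hj
  · simpa using hj
  · simpa [hj] using apply_ne_of_mem hr hT hc ht j

lemma reassign_idem (hr : ∀ i, r (r i) = r i) (hT : ∀ j ∈ T, r j = c) (hc : c ∉ T)
    (ht : t ∈ T) (j : I) : reassign r T t (reassign r T t j) = reassign r T t j := by
  by_cases hj : j ∈ T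
  · simp [reassign, hj, ht]
  · have hrj : r j ∉ T := fun h => hc (by rwa [← hT _ h, hr])
    simp [reassign, hj, hrj, hr]

lemma comp_reassign (hr : ∀ i, r (r i) = r i) (hT : ∀ j ∈ T, r j = c) (ht : t ∈ T) :
    r ∘ reassign r T t = r := by
  funext j
  by_cases hj : j ∈ T
  · simp [reassign, hj, hT t ht, hT j hj]
  · simp [reassign, hj, hr]

end Reassign

variable [Fintype I] [DecidableEq I]

def group (r : I → I) (i : I) : Finset I := univ.filter fun j => r j = r i

def IsKAnonymous (k : ℕ) (r : I → I) : Prop :=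
  (∀ i, r (r i) = r i) ∧ ∀ i, k ≤ #(group r i)

lemma group_subset_of_comp_eq {r r' : I → I} (h : r ∘ r' = r) (i : I) :
    group r' i ⊆ group r i := by
  intro j hj
  simp only [group, mem_filter, mem_univ, true_and] at hj ⊢
  rw [← congrFun h j, ← congrFun h i, Function.comp_apply, Function.comp_apply, hj]

lemma isKAnonymous_const {k : ℕ} (i₀ : I) (hI : k ≤ Fintype.card I) :
    IsKAnonymous k fun _ => i₀ :=
  ⟨fun _ => rfl, fun _ => by simpa [group] using hI⟩

lemma group_reassign (hr : ∀ i, r (r i) = r i) (hT : ∀ j ∈ T, r j = c) (hc : c ∉ T)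
    (ht : t ∈ T) (j : I) :
    group (reassign r T t) j = if j ∈ T then T else group r j \ T := by
  ext j'
  split_ifs with hj
  · simp [group, (reassign_eq_iff hr hT hc ht j).2 hj, reassign_eq_iff hr hT hc ht]
  · have hne : t ≠ r j := (apply_ne_of_mem hr hT hc ht j).symm
    by_cases hj' : j' ∈ T <;> simp [group, reassign, hj, hj', hne]

lemma exists_refinement_of_two_mul_le_card {k : ℕ} (hk : 1 ≤ k) {r : I → I}
    (hr : IsKAnonymous k r) {i₀ : I} (hbig : 2 * k ≤ #(group r i₀)) :
    ∃ r', IsKAnonymous k r' ∧ r ∘ r' = r ∧ ∑ i, #(group r' i) < ∑ i, #(group r i) := by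
  set c := r i₀
  have hrc : r c = c := hr.1 i₀
  have mem_group : ∀ j, j ∈ group r c ↔ r j = c := by simp [group, hrc]
  have hC : group r c = group r i₀ := by simp only [group, hrc, c]
  rw [← hC] at hbig
  have hcC : c ∈ group r c := (mem_group c).2 hrc
  obtain ⟨T, hTC, hTcard⟩ := exists_subset_card_eq (s := (group r c).erase c) (n := k)
    (by rw [card_erase_of_mem hcC]; omega)
  obtain ⟨t, ht⟩ : T.Nonempty := by rw [← card_pos]; omega
  have hT : ∀ j ∈ T, r j = c := fun j hj => (mem_group j).1 (mem_of_mem_erase (hTC hj))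
  have hc : c ∉ T := fun h => by simpa using hTC h
  have hTC' : T ⊆ group r c := hTC.trans (erase_subset c _)
  have hgroup := group_reassign hr.1 hT hc ht
  have hrefine := comp_reassign hr.1 hT ht
  refine ⟨reassign r T t, ⟨reassign_idem hr.1 hT hc ht, fun j => ?_⟩, hrefine, ?_⟩
  · rw [hgroup]
    split_ifs with hj
    · exact hTcard.ge
    · by_cases hjC : r j = c
      · have : group r j = group r c := by simp only [group, hjC, hrc]
        rw [this, card_sdiff_of_subset hTC']
        omega
      · have : Disjoint (group r j) T := disjoint_left.2 fun j' hj' hj'T => by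
          simp only [group, mem_filter, mem_univ, true_and] at hj'
          exact hjC (hj' ▸ hT j' hj'T)
        rw [sdiff_eq_self_of_disjoint this]
        exact hr.2 j
  · refine sum_lt_sum (fun i _ => card_le_card (group_subset_of_comp_eq hrefine i))
      ⟨c, mem_univ c, card_lt_card ?_⟩
    rw [hgroup, if_neg hc]
    exact sdiff_ssubset hTC' ⟨t, ht⟩

lemma exists_optimal_with_small_groups {ι β : Type*} [Fintype ι] [DecidableEq β] {k : ℕ}
    (hk : 1 ≤ k) (hI : k ≤ Fintype.card I) (x : I → ι → β) :
    ∃ r y, IsKAnonymous k r ∧ (∀ i, #(group r i) ≤ 2 * k - 1) ∧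
      ∀ r' y', IsKAnonymous k r' → cost x r y ≤ cost x r' y' := by
  obtain ⟨i₀⟩ : Nonempty I := Fintype.card_pos_iff.1 (by omega)
  let S : Set ((I → I) × (I → ι → β)) := {p | IsKAnonymous k p.1}
  have hS : S.Nonempty := ⟨(fun _ => i₀, x), isKAnonymous_const i₀ hI⟩
  let key : (I → I) × (I → ι → β) → ℕ ×ₗ ℕ := fun p =>
    toLex (cost x p.1 p.2, ∑ i, #(group p.1 i))
  set p := Function.argminOn key S hS
  have hp : IsKAnonymous k p.1 := Function.argminOn_mem key S hS
  have hmin : ∀ q ∈ S, ¬key q < key p := fun q hq => Function.not_lt_argminOn key S hq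
  refine ⟨p.1, p.2, hp, fun i => ?_, fun r' y' hr' => ?_⟩
  · by_contra! hbig
    obtain ⟨r', hr', hrefine, hlt⟩ :=
      exists_refinement_of_two_mul_le_card hk hp (i₀ := i) (by omega)
    exact hmin (r', p.2 ∘ p.1) hr'
      (Prod.Lex.toLex_lt_toLex.2 (.inr ⟨cost_comp_of_comp_eq x p.2 hrefine, hlt⟩))
  · by_contra! hlt
    exact hmin (r', y') hr' (Prod.Lex.toLex_lt_toLex.2 (.inl hlt))

end KAnonymity

open KAnonymity in
theorem stmt10 {I : Type*} [Fintype I] [DecidableEq I] {m k : ℕ} (hk : 1 ≤ k)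
    (hI : k ≤ Fintype.card I) (x : I → Fin m → Bool) :
    (∀ G : Finset I, 2 * k ≤ G.card → ∃ G1 G2 : Finset I,
        Disjoint G1 G2 ∧ G1 ∪ G2 = G ∧ k ≤ G1.card ∧ k ≤ G2.card) ∧
    ∃ (r : I → I) (y : I → Fin m → Bool),
      (∀ i, r (r i) = r i) ∧
      (∀ i : I, k ≤ (Finset.univ.filter fun j => r j = r i).card) ∧
      (∀ i : I, (Finset.univ.filter fun j => r j = r i).card ≤ 2 * k - 1) ∧
      ∀ (r' : I → I) (y' : I → Fin m → Bool), (∀ i, r' (r' i) = r' i) →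
        (∀ i : I, k ≤ (Finset.univ.filter fun j => r' j = r' i).card) →
        ∑ i : I, hammingDist (x i) (y (r i)) ≤
          ∑ i : I, hammingDist (x i) (y' (r' i)) := by
  obtain ⟨r, y, ⟨hidem, hlarge⟩, hsmall, hopt⟩ := exists_optimal_with_small_groups hk hI x
  exact ⟨fun G hG => exists_disjoint_union_eq_of_add_le_card (by omega),
    r, y, hidem, hlarge, hsmall, fun r' y' hidem' hlarge' => hopt r' y' ⟨hidem', hlarge'⟩⟩
end

section
/- Any feasible solution to the $k$-group clustering problem (a partition of an indexed family of points in $\{0,1\}^m$ into clusters of size at least $k$ with centers in $\{0,1\}^m$) yields a $k$-anonymous dataset obtained by replacing every point with its cluster's center, and the number of coordinate changes made (sum of Hamming distances of points to their centers) equals the clustering cost. Conversely, any $k$-anonymous transformation of the dataset yields a $k$-group clustering of equal cost. -/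
/-!
Replacing each point by its cluster's center makes all members of a cluster equal, so every
record has at least as many copies as its cluster has members. Conversely, the fibers of a
`k`-anonymous transformation `x'` are clusters of size at least `k`; choosing one member of each
fiber as its representative, with center its common value, changes no record.
-/

open Finset

/-- `k`-anonymity: every record is identical to at least `k - 1` other records
(i.e. every value of the family is attained by at least `k` indices). -/
def kAnon {I : Type*} [Fintype I] {m : ℕ} (k : ℕ) (x' : I → Fin m → Bool) : Prop :=
  ∀ i : I, k ≤ (Finset.univ.filter fun j => x' j = x' i).card

theorem card_filter_eq_le_card_filter_comp_eq {I α β : Type*} [Fintype I] [DecidableEq α]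
    [DecidableEq β] (r : I → α) (g : α → β) (i : I) :
    (univ.filter fun j => r j = r i).card ≤ (univ.filter fun j => g (r j) = g (r i)).card :=
  card_le_card <| monotone_filter_right _ fun _ _ h => congrArg g h

theorem kAnon_comp {I α : Type*} [Fintype I] [DecidableEq α] {m k : ℕ} (r : I → α)
    (y : α → Fin m → Bool) (hr : ∀ i, k ≤ (univ.filter fun j => r j = r i).card) :
    kAnon k (fun i => y (r i)) :=
  fun i => (hr i).trans (card_filter_eq_le_card_filter_comp_eq r y i)

section FiberRep

variable {I β : Type*} (f : I → β)

noncomputable def fiberRep (i : I) : I :=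
  (Quotient.mk (Setoid.ker f) i).out

theorem fiberRep_eq_iff {i j : I} : fiberRep f i = fiberRep f j ↔ f i = f j :=
  Quotient.out_inj.trans Quotient.eq

theorem apply_fiberRep (i : I) : f (fiberRep f i) = f i :=
  Quotient.mk_out (s := Setoid.ker f) i

theorem fiberRep_fiberRep (i : I) : fiberRep f (fiberRep f i) = fiberRep f i :=
  (fiberRep_eq_iff f).2 (apply_fiberRep f i)

theorem filter_fiberRep_eq [Fintype I] [DecidableEq I] [DecidableEq β] (i : I) :
    (univ.filter fun j => fiberRep f j = fiberRep f i) = univ.filter fun j => f j = f i :=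
  filter_congr fun _ _ => fiberRep_eq_iff f

end FiberRep

theorem stmt13 {I : Type*} [Fintype I] [DecidableEq I] {m k : ℕ}
    (x : I → Fin m → Bool) :
    (∀ (r : I → I) (y : I → Fin m → Bool), (∀ i, r (r i) = r i) →
      (∀ i : I, k ≤ (Finset.univ.filter fun j => r j = r i).card) →
      kAnon k (fun i => y (r i)) ∧
        ∑ i : I, hammingDist (x i) ((fun i => y (r i)) i) =
          ∑ i : I, hammingDist (x i) (y (r i))) ∧
    (∀ x' : I → Fin m → Bool, kAnon k x' →
      ∃ (r : I → I) (y : I → Fin m → Bool), (∀ i, r (r i) = r i) ∧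
        (∀ i : I, k ≤ (Finset.univ.filter fun j => r j = r i).card) ∧
        (∀ i, y (r i) = x' i) ∧
        ∑ i : I, hammingDist (x i) (y (r i)) =
          ∑ i : I, hammingDist (x i) (x' i)) := by
  refine ⟨fun r y _ hr => ⟨kAnon_comp r y hr, rfl⟩, fun x' hx' => ?_⟩
  refine ⟨fiberRep x', x', fiberRep_fiberRep x', fun i => ?_, apply_fiberRep x', ?_⟩
  · rw [filter_fiberRep_eq]
    exact hx' i
  · simp only [apply_fiberRep]
end

section
/- The optimal flip-based $k$-anonymization cost of a binary dataset equals the optimal $k$-group clustering cost with arbitrary centers in $\{0,1\}^m$; moreover, restricting centers to data points increases the optimal cost by a factor of at most $2$. Hence an $\alpha$-approximation to the data-point-centered $k$-group clustering problem (load-balanced facility location) yields a $2\alpha$-approximation to the flip-based $k$-anonymization problem. -/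
open Finset

/-- Costs of feasible flip-based `k`-anonymous solutions. -/
def flipCosts {I : Type*} [Fintype I] {m : ℕ} (k : ℕ) (x : I → Fin m → Bool) :
    Set ℕ :=
  {c | ∃ x' : I → Fin m → Bool, kAnon k x' ∧ c = ∑ i : I, hammingDist (x i) (x' i)}

/-- Costs of feasible `k`-group clusterings with arbitrary centers in `{0,1}^m`. -/
def clusterCosts {I : Type*} [Fintype I] [DecidableEq I] {m : ℕ} (k : ℕ)
    (x : I → Fin m → Bool) : Set ℕ :=
  {c | ∃ (r : I → I) (y : I → Fin m → Bool), (∀ i, r (r i) = r i) ∧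
    (∀ i : I, k ≤ (Finset.univ.filter fun j => r j = r i).card) ∧
    c = ∑ i : I, hammingDist (x i) (y (r i))}

/-- Costs of feasible `k`-group clusterings with centers restricted to data points. -/
def restrCosts {I : Type*} [Fintype I] [DecidableEq I] {m : ℕ} (k : ℕ)
    (x : I → Fin m → Bool) : Set ℕ :=
  {c | ∃ (r : I → I) (y : I → Fin m → Bool), (∀ i, r (r i) = r i) ∧
    (∀ i : I, k ≤ (Finset.univ.filter fun j => r j = r i).card) ∧
    (∀ i : I, ∃ j : I, y i = x j) ∧
    c = ∑ i : I, hammingDist (x i) (y (r i))}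

/-!
A `k`-anonymous table is the same thing as a `k`-group clustering: the clusters are the classes
of equal rows, and each row is flipped to its cluster's center. Moving each center to the data
point of its cluster that is nearest to it at most doubles the cost, since by the triangle
inequality `d(xᵢ, x_a) ≤ d(xᵢ, y) + d(x_a, y) ≤ 2 d(xᵢ, y)`.
-/

theorem card_fiber_le_card_fiber {I J K : Type*} [Fintype I] [DecidableEq J] [DecidableEq K]
    {r : I → J} {s : I → K} (h : ∀ i j, r i = r j → s i = s j) (i : I) :
    #{j | r j = r i} ≤ #{j | s j = s i} :=
  card_le_card fun j hj => by
    simp only [mem_filter, mem_univ, true_and] at hj ⊢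
    exact h j i hj

theorem hammingDist_le_two_mul_of_le {ι : Type*} [Fintype ι] {β : ι → Type*}
    [∀ i, DecidableEq (β i)] {a b c : ∀ i, β i} (h : hammingDist b c ≤ hammingDist a c) :
    hammingDist a b ≤ 2 * hammingDist a c := by
  have := hammingDist_triangle_right a b c
  omega

theorem Nat.sInf_le_mul_sInf {S T : Set ℕ} {n : ℕ} (hTS : T ⊆ S)
    (h : ∀ c ∈ S, ∃ c' ∈ T, c' ≤ n * c) : sInf T ≤ n * sInf S := by
  rcases S.eq_empty_or_nonempty with rfl | hS
  · simp [Set.subset_empty_iff.mp hTS]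
  · obtain ⟨c', hc', hle⟩ := h _ (Nat.sInf_mem hS)
    exact (Nat.sInf_le hc').trans hle

section FiberArgmin

variable {I J : Type*} (r : I → J) (g : I → ℕ)

noncomputable def fiberArgmin (i : I) : I :=
  Function.argminOn g {j | r j = r i} ⟨i, rfl⟩

theorem apply_fiberArgmin (i : I) : r (fiberArgmin r g i) = r i :=
  Function.argminOn_mem g {j | r j = r i} _

theorem fiberArgmin_le {i j : I} (h : r j = r i) : g (fiberArgmin r g i) ≤ g j :=
  Function.argminOn_le g {j | r j = r i} h

theorem fiberArgmin_eq_of_apply_eq {i j : I} (h : r i = r j) :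
    fiberArgmin r g i = fiberArgmin r g j := by
  simp only [fiberArgmin, h]

theorem fiberArgmin_fiberArgmin (i : I) :
    fiberArgmin r g (fiberArgmin r g i) = fiberArgmin r g i :=
  fiberArgmin_eq_of_apply_eq r g (apply_fiberArgmin r g i)

end FiberArgmin

section Costs

variable {I : Type*} [Fintype I] [DecidableEq I] {m k : ℕ} (x : I → Fin m → Bool)

theorem clusterCosts_subset_flipCosts : clusterCosts k x ⊆ flipCosts k x := by
  rintro c ⟨r, y, -, hr, rfl⟩
  exact ⟨fun i => y (r i),
    fun i => (hr i).trans (card_fiber_le_card_fiber (fun i j h => by rw [h]) i), rfl⟩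

theorem flipCosts_subset_clusterCosts : flipCosts k x ⊆ clusterCosts k x := by
  rintro c ⟨x', hx', rfl⟩
  refine ⟨fiberArgmin x' 0, x', fiberArgmin_fiberArgmin x' 0,
    fun i => (hx' i).trans
      (card_fiber_le_card_fiber (fun _ _ => fiberArgmin_eq_of_apply_eq x' 0) i),
    sum_congr rfl fun i _ => by rw [apply_fiberArgmin x']⟩

theorem flipCosts_eq_clusterCosts : flipCosts k x = clusterCosts k x :=
  (flipCosts_subset_clusterCosts x).antisymm (clusterCosts_subset_flipCosts x)

theorem restrCosts_subset_clusterCosts : restrCosts k x ⊆ clusterCosts k x := by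
  rintro c ⟨r, y, hr, hk, -, hc⟩
  exact ⟨r, y, hr, hk, hc⟩

theorem exists_mem_restrCosts_le_two_mul {c : ℕ} (hc : c ∈ clusterCosts k x) :
    ∃ c' ∈ restrCosts k x, c' ≤ 2 * c := by
  obtain ⟨r, y, -, hr, rfl⟩ := hc
  set s := fiberArgmin r fun j => hammingDist (x j) (y (r j))
  refine ⟨_, ⟨s, x, fiberArgmin_fiberArgmin _ _,
    fun i => (hr i).trans (card_fiber_le_card_fiber (fun _ _ => fiberArgmin_eq_of_apply_eq _ _) i),
    fun i => ⟨i, rfl⟩, rfl⟩, ?_⟩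
  rw [mul_sum]
  refine sum_le_sum fun i _ => hammingDist_le_two_mul_of_le ?_
  have hmin := fiberArgmin_le r (fun j => hammingDist (x j) (y (r j))) (rfl : r i = r i)
  rwa [apply_fiberArgmin r] at hmin

end Costs

theorem stmt19_general {I : Type*} [Fintype I] [DecidableEq I] {m k : ℕ}
    (x : I → Fin m → Bool) (α : ℝ) (hα : 1 ≤ α) :
    sInf (flipCosts k x) = sInf (clusterCosts k x) ∧
    sInf (restrCosts k x) ≤ 2 * sInf (clusterCosts k x) ∧
    ∀ c ∈ restrCosts k x, (c : ℝ) ≤ α * ((sInf (restrCosts k x) : ℕ) : ℝ) →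
      c ∈ flipCosts k x ∧ (c : ℝ) ≤ 2 * α * ((sInf (flipCosts k x) : ℕ) : ℝ) := by
  have hflip := flipCosts_eq_clusterCosts (k := k) x
  have hrestr : sInf (restrCosts k x) ≤ 2 * sInf (clusterCosts k x) :=
    Nat.sInf_le_mul_sInf (restrCosts_subset_clusterCosts x)
      fun _ => exists_mem_restrCosts_le_two_mul x
  refine ⟨by rw [hflip], hrestr,
    fun c hc hcα => ⟨hflip ▸ restrCosts_subset_clusterCosts x hc, ?_⟩⟩
  rw [hflip]
  calc (c : ℝ) ≤ α * ((sInf (restrCosts k x) : ℕ) : ℝ) := hcα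
    _ ≤ α * (2 * ((sInf (clusterCosts k x) : ℕ) : ℝ)) :=
        mul_le_mul_of_nonneg_left (mod_cast hrestr) (by linarith)
    _ = 2 * α * ((sInf (clusterCosts k x) : ℕ) : ℝ) := by ring

theorem stmt19 {I : Type*} [Fintype I] [DecidableEq I] {m k : ℕ} (hk : 1 ≤ k)
    (hI : k ≤ Fintype.card I) (x : I → Fin m → Bool) (α : ℝ) (hα : 1 ≤ α) :
    sInf (flipCosts k x) = sInf (clusterCosts k x) ∧
    sInf (restrCosts k x) ≤ 2 * sInf (clusterCosts k x) ∧
    ∀ c ∈ restrCosts k x, (c : ℝ) ≤ α * ((sInf (restrCosts k x) : ℕ) : ℝ) →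
      c ∈ flipCosts k x ∧ (c : ℝ) ≤ 2 * α * ((sInf (flipCosts k x) : ℕ) : ℝ) :=
  stmt19_general x α hα
end
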